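/- arXiv:1111.1041 — 7 statements merged into one kernel-verified Lean document; each statement's English description precedes it below -/
import Mathlib

section
/- Fix a parameter set Θ and, for each dimension N, a family F_{N,ε} of Borel probability measures on ℝ^N satisfying: (i) if ν₁ ∈ F_{1,ε}, then the N-fold product measure ν₁ × ⋯ × ν₁ belongs to F_{N,ε}; and (ii) if ν_N ∈ F_{N,ε}, then the average of its one-dimensional coordinate marginals ν̄_N = N⁻¹ Σ_{i=1}^N ν_{N,i} belongs to F_{1,ε}. Let η be a separable denoiser, i.e. η(v;τ) = (η₁(v₁;τ), …, η₁(v_N;τ)) for a measurable scalar function η₁(·;τ): ℝ → ℝ, τ ∈ Θ. Then for every N, M(F_{N,ε}|η) = M(F_{1,ε}|η₁). -/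
/-!
For a separable denoiser the loss splits over coordinates, and by Tonelli each coordinate
contributes the scalar risk of its marginal; since the scalar risk is an integral against the
signal law, it is linear in that law. Hence the `N`-dimensional risk of `ν` is `N` times the scalar
risk of the averaged marginal `ν̄`. Averaging maps `F N` onto `F1`: into it by (ii), and onto it
because the averaged marginal of `ν₁ × ⋯ × ν₁` is `ν₁`, which lies in the image by (i). So for
each `τ` the two suprema agree up to the factor `N`.
-/

open MeasureTheory ProbabilityTheory ENNReal

noncomputable section

/-- The standard Gaussian measure `N(0, I_N)` on `ℝ^N`. -/
def stdGaussian (N : ℕ) : Measure (Fin N → ℝ) :=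
  Measure.pi fun _ => gaussianReal 0 1

-- `_root_` distinguishes this from Mathlib's `ProbabilityTheory.stdGaussian`.
instance (N : ℕ) : IsProbabilityMeasure (_root_.stdGaussian N) := by
  unfold _root_.stdGaussian
  infer_instance

namespace MeasureTheory.Measure

variable {α : Type*} [MeasurableSpace α] {N : ℕ}

def avgMarginal (ν : Measure (Fin N → α)) : Measure α :=
  (N : ℝ≥0∞)⁻¹ • ∑ i : Fin N, ν.map (fun x => x i)

theorem natCast_mul_lintegral_avgMarginal (hN : N ≠ 0) (ν : Measure (Fin N → α))
    {f : α → ℝ≥0∞} (hf : Measurable f) :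
    (N : ℝ≥0∞) * ∫⁻ y, f y ∂ν.avgMarginal = ∫⁻ x, ∑ i, f (x i) ∂ν := by
  have hN' : (N : ℝ≥0∞) ≠ 0 := Nat.cast_ne_zero.mpr hN
  rw [avgMarginal, lintegral_smul_measure, lintegral_finsetSum_measure, smul_eq_mul,
    ← mul_assoc, ENNReal.mul_inv_cancel hN' (natCast_ne_top N), one_mul,
    lintegral_finsetSum (f := fun (i : Fin N) (x : Fin N → α) => f (x i)) _
      fun i _ => hf.comp (measurable_pi_apply i)]
  exact Finset.sum_congr rfl fun i _ => lintegral_map hf (measurable_pi_apply i)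

theorem avgMarginal_pi (hN : N ≠ 0) (μ : Measure α) [IsProbabilityMeasure μ] :
    (Measure.pi fun _ : Fin N => μ).avgMarginal = μ := by
  have hN' : (N : ℝ≥0∞) ≠ 0 := Nat.cast_ne_zero.mpr hN
  simp only [avgMarginal, (measurePreserving_eval (fun _ : Fin N => μ) _).map_eq,
    Finset.sum_const, Finset.card_univ, Fintype.card_fin, ← Nat.cast_smul_eq_nsmul ℝ≥0∞,
    smul_smul, ENNReal.inv_mul_cancel hN' (natCast_ne_top N), one_smul]

theorem image_avgMarginal_eq {F : Set (Measure (Fin N → α))} {F1 : Set (Measure α)}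
    (hN : N ≠ 0) (hprob1 : ∀ μ ∈ F1, IsProbabilityMeasure μ)
    (hprod : ∀ μ ∈ F1, Measure.pi (fun _ : Fin N => μ) ∈ F)
    (hmarg : ∀ ν ∈ F, ν.avgMarginal ∈ F1) :
    avgMarginal '' F = F1 := by
  refine Set.Subset.antisymm (Set.image_subset_iff.mpr hmarg) fun μ hμ => ?_
  have := hprob1 μ hμ
  exact ⟨_, hprod μ hμ, avgMarginal_pi hN μ⟩

end MeasureTheory.Measure

section SeparableRisk

open Measure

variable {Θ : Type*} (η₁ : Θ → ℝ → ℝ) (τ : Θ)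

def pointwiseRisk (x : ℝ) : ℝ≥0∞ :=
  ∫⁻ z, ENNReal.ofReal ((x - η₁ τ (x + z)) ^ 2) ∂gaussianReal 0 1

variable {η₁} (hmeas : Measurable (η₁ τ))
include hmeas

theorem measurable_sqLoss :
    Measurable fun p : ℝ × ℝ => ENNReal.ofReal ((p.1 - η₁ τ (p.1 + p.2)) ^ 2) := by
  fun_prop

theorem measurable_pointwiseRisk : Measurable (pointwiseRisk η₁ τ) :=
  (measurable_sqLoss τ hmeas).lintegral_prod_right'

theorem lintegral_prod_gaussianReal_sqLoss (μ : Measure ℝ) :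
    ∫⁻ p, ENNReal.ofReal ((p.1 - η₁ τ (p.1 + p.2)) ^ 2) ∂(μ.prod (gaussianReal 0 1)) =
      ∫⁻ x, pointwiseRisk η₁ τ x ∂μ :=
  lintegral_prod _ (measurable_sqLoss τ hmeas).aemeasurable

theorem lintegral_stdGaussian_sum_sqLoss {N : ℕ} (x : Fin N → ℝ) :
    ∫⁻ z, ENNReal.ofReal (∑ i, (x i - η₁ τ (x i + z i)) ^ 2) ∂stdGaussian N =
      ∑ i, pointwiseRisk η₁ τ (x i) := by
  have hloss (i : Fin N) :
      Measurable fun z : Fin N → ℝ => ENNReal.ofReal ((x i - η₁ τ (x i + z i)) ^ 2) := by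
    fun_prop
  simp_rw [ENNReal.ofReal_sum_of_nonneg fun i _ => sq_nonneg (x i - η₁ τ (x i + _))]
  rw [lintegral_finsetSum _ fun i _ => hloss i]
  refine Finset.sum_congr rfl fun i _ => ?_
  exact (measurePreserving_eval (fun _ : Fin N => gaussianReal 0 1) i).lintegral_comp
    (f := fun z => ENNReal.ofReal ((x i - η₁ τ (x i + z)) ^ 2)) (by fun_prop)

theorem lintegral_prod_stdGaussian_sum_sqLoss {N : ℕ} (hN : N ≠ 0) (ν : Measure (Fin N → ℝ)) :
    ∫⁻ p, ENNReal.ofReal (∑ i, (p.1 i - η₁ τ (p.1 i + p.2 i)) ^ 2) ∂(ν.prod (stdGaussian N)) =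
      N * ∫⁻ p, ENNReal.ofReal ((p.1 - η₁ τ (p.1 + p.2)) ^ 2)
        ∂(ν.avgMarginal.prod (gaussianReal 0 1)) := by
  rw [lintegral_prod _ (by fun_prop), lintegral_prod_gaussianReal_sqLoss τ hmeas,
    natCast_mul_lintegral_avgMarginal hN ν (measurable_pointwiseRisk τ hmeas)]
  simp_rw [lintegral_stdGaussian_sum_sqLoss τ hmeas]

end SeparableRisk

theorem separable_minimax_mse_general
    {Θ : Type*} (η₁ : Θ → ℝ → ℝ)
    (hmeas : ∀ τ : Θ, Measurable (η₁ τ))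
    (F : (N : ℕ) → Set (Measure (Fin N → ℝ))) (F1 : Set (Measure ℝ))
    (hprob1 : ∀ ν ∈ F1, IsProbabilityMeasure ν)
    -- (i) products of a one-dimensional member belong to the `N`-dimensional family
    (hprod : ∀ (N : ℕ) (ν₁ : Measure ℝ), ν₁ ∈ F1 →
      Measure.pi (fun _ : Fin N => ν₁) ∈ F N)
    -- (ii) the average of the coordinate marginals belongs to the one-dimensional family
    (hmarg : ∀ (N : ℕ), 0 < N → ∀ ν ∈ F N,
      ((N : ℝ≥0∞)⁻¹ • ∑ i : Fin N, Measure.map (fun x => x i) ν) ∈ F1)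
    (N : ℕ) (hN : 0 < N) :
    (N : ℝ≥0∞)⁻¹ *
      ⨅ τ : Θ, ⨆ ν ∈ F N,
        ∫⁻ p, ENNReal.ofReal (∑ i, (p.1 i - η₁ τ (p.1 i + p.2 i)) ^ 2)
          ∂(ν.prod (stdGaussian N)) =
    ⨅ τ : Θ, ⨆ ν ∈ F1,
      ∫⁻ p : ℝ × ℝ, ENNReal.ofReal ((p.1 - η₁ τ (p.1 + p.2)) ^ 2)
        ∂(ν.prod (gaussianReal 0 1)) := by
  have hN0 : (N : ℝ≥0∞) ≠ 0 := Nat.cast_ne_zero.mpr hN.ne'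
  have himage : Measure.avgMarginal '' F N = F1 :=
    Measure.image_avgMarginal_eq hN.ne' hprob1 (hprod N) (hmarg N hN)
  have hsup (τ : Θ) :
      ⨆ ν ∈ F N, ∫⁻ p, ENNReal.ofReal (∑ i, (p.1 i - η₁ τ (p.1 i + p.2 i)) ^ 2)
          ∂(ν.prod (stdGaussian N)) =
        N * ⨆ ν ∈ F1, ∫⁻ p : ℝ × ℝ, ENNReal.ofReal ((p.1 - η₁ τ (p.1 + p.2)) ^ 2)
          ∂(ν.prod (gaussianReal 0 1)) := by
    simp_rw [lintegral_prod_stdGaussian_sum_sqLoss τ (hmeas τ) hN.ne', ← himage, iSup_image,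
      ENNReal.mul_iSup]
  simp_rw [hsup, ← ENNReal.mul_iInf_of_ne hN0 (natCast_ne_top N), ← mul_assoc,
    ENNReal.inv_mul_cancel hN0 (natCast_ne_top N), one_mul]

/-- **Minimax MSE of a separable denoiser.**
If the family `F N` of probability measures on `ℝ^N` is closed under forming
products of a one-dimensional member (i), and the average of the coordinate
marginals of any member lies in the one-dimensional family (ii), then for any
separable denoiser `η(v;τ) = (η₁(v₁;τ),…,η₁(v_N;τ))` the minimax MSE in
dimension `N` equals the one-dimensional minimax MSE. -/
theorem separable_minimax_mse
    {Θ : Type*} (η₁ : Θ → ℝ → ℝ)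
    (hmeas : ∀ τ : Θ, Measurable (η₁ τ))
    (F : (N : ℕ) → Set (Measure (Fin N → ℝ))) (F1 : Set (Measure ℝ))
    (hprob : ∀ N : ℕ, ∀ ν ∈ F N, IsProbabilityMeasure ν)
    (hprob1 : ∀ ν ∈ F1, IsProbabilityMeasure ν)
    -- (i) products of a one-dimensional member belong to the `N`-dimensional family
    (hprod : ∀ (N : ℕ) (ν₁ : Measure ℝ), ν₁ ∈ F1 →
      Measure.pi (fun _ : Fin N => ν₁) ∈ F N)
    -- (ii) the average of the coordinate marginals belongs to the one-dimensional family
    (hmarg : ∀ (N : ℕ), 0 < N → ∀ ν ∈ F N,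
      ((N : ℝ≥0∞)⁻¹ • ∑ i : Fin N, Measure.map (fun x => x i) ν) ∈ F1)
    (N : ℕ) (hN : 0 < N) :
    (N : ℝ≥0∞)⁻¹ *
      ⨅ τ : Θ, ⨆ ν ∈ F N,
        ∫⁻ p, ENNReal.ofReal (∑ i, (p.1 i - η₁ τ (p.1 i + p.2 i)) ^ 2)
          ∂(ν.prod (stdGaussian N)) =
    ⨅ τ : Θ, ⨆ ν ∈ F1,
      ∫⁻ p : ℝ × ℝ, ENNReal.ofReal ((p.1 - η₁ τ (p.1 + p.2)) ^ 2)
        ∂(ν.prod (gaussianReal 0 1)) :=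
  separable_minimax_mse_general η₁ hmeas F F1 hprob1 hprod hmarg N hN
end
end

section
/- Let M_N = {x ∈ ℝ^N : x_t ≤ x_{t+1} for all 1 ≤ t ≤ N−1} be the cone of nondecreasing sequences and let η^mono: ℝ^N → ℝ^N be the Euclidean projection onto M_N, i.e. η^mono(y) is the unique minimizer of ‖y − x‖₂² over x ∈ M_N. Define the risk R_N(μ) = E ‖η^mono(μ + Z) − μ‖₂² with Z ∼ N(0, I_N). Then for every μ ∈ M_N, the function t ↦ R_N(tμ) is monotone nondecreasing on [0,∞). -/
open MeasureTheory ProbabilityTheory ENNReal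

noncomputable section

/-- The cone `M_N` of nondecreasing sequences in `ℝ^N`. -/
def monoCone (N : ℕ) : Set (Fin N → ℝ) := {x | Monotone x}

/-!
Write `y(t) = t • μ + z`, `r(t) = y(t) - P y(t)` and `g(t) = ‖r(t)‖²`. Because `K` is a convex
cone, `r(t) ⟂ P y(t)`, so the loss is `‖P y(t) - t • μ‖² = ‖z‖² - g(t) + 2t⟪r(t), μ⟫`, that is
`‖z‖² - g + t g'`. The squared distance `g` is convex with derivative `2⟪r(t), μ⟫`, and for
convex `g` the function `t g' - g` is nondecreasing on `t ≥ 0`: this needs only the subgradient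
inequality for `g` and the monotonicity of `t ↦ ⟪r(t), μ⟫`. Hence the loss is nondecreasing in
`t` for every fixed noise `z`, and so is its Gaussian expectation.
-/

open scoped InnerProductSpace
open WithLp

def IsMetricProjection {E : Type*} [NormedAddCommGroup E] (K : Set E) (P : E → E) : Prop :=
  ∀ y, P y ∈ K ∧ ∀ x ∈ K, ‖y - P y‖ ≤ ‖y - x‖

namespace IsMetricProjection

variable {E : Type*} [NormedAddCommGroup E] [InnerProductSpace ℝ E] {K : Set E} {P : E → E}

theorem inner_sub_le_zero (hP : IsMetricProjection K P) (hK : Convex ℝ K) (y : E) {x : E}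
    (hx : x ∈ K) : ⟪y - P y, x - P y⟫_ℝ ≤ 0 := by
  obtain ⟨hPy, hmin⟩ := hP y
  have : Nonempty K := ⟨⟨P y, hPy⟩⟩
  refine (norm_eq_iInf_iff_real_inner_le_zero hK hPy).1 ?_ x hx
  exact le_antisymm (le_ciInf fun w => hmin w w.2)
    (ciInf_le (⟨0, Set.forall_mem_range.2 fun _ => norm_nonneg _⟩ :
      BddBelow (Set.range fun w : K => ‖y - w‖)) ⟨P y, hPy⟩)

theorem norm_sub_sq_add_two_inner_le (hP : IsMetricProjection K P) (hK : Convex ℝ K) (a b : E) :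
    ‖a - P a‖ ^ 2 + 2 * ⟪a - P a, b - a⟫_ℝ ≤ ‖b - P b‖ ^ 2 := by
  have hvi := hP.inner_sub_le_zero hK a (hP b).1
  rw [show b - P b = (a - P a) + ((b - a) - (P b - P a)) by abel, norm_add_sq_real,
    inner_sub_right (a - P a) (b - a)]
  nlinarith [sq_nonneg ‖(b - a) - (P b - P a)‖]

theorem inner_sub_sub_sub_nonneg (hP : IsMetricProjection K P) (hK : Convex ℝ K) (a b : E) :
    0 ≤ ⟪(a - P a) - (b - P b), a - b⟫_ℝ := by
  have ha := hP.inner_sub_le_zero hK a (hP b).1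
  have hb := hP.inner_sub_le_zero hK b (hP a).1
  rw [show a - b = ((a - P a) - (b - P b)) - (P b - P a) by abel, inner_sub_right,
    real_inner_self_eq_norm_sq, inner_sub_left]
  rw [← neg_sub (P b) (P a), inner_neg_right] at hb
  nlinarith [sq_nonneg ‖(a - P a) - (b - P b)‖]

theorem monotone_inner_sub_apply_smul_add (hP : IsMetricProjection K P) (hK : Convex ℝ K)
    (μ z : E) : Monotone fun t : ℝ => ⟪t • μ + z - P (t • μ + z), μ⟫_ℝ := by
  intro s t hst
  rcases hst.eq_or_lt with rfl | hlt
  · rfl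
  have h := hP.inner_sub_sub_sub_nonneg hK (t • μ + z) (s • μ + z)
  rw [add_sub_add_right_eq_sub, ← sub_smul, real_inner_smul_right, inner_sub_left] at h
  simpa using (mul_nonneg_iff_of_pos_left (sub_pos.2 hlt)).1 h

theorem inner_sub_self_eq_zero (hP : IsMetricProjection K P) (hK : Convex ℝ K)
    (hcone : ∀ c : ℝ, 0 ≤ c → ∀ x ∈ K, c • x ∈ K) (y : E) : ⟪y - P y, P y⟫_ℝ = 0 := by
  have h0 := hP.inner_sub_le_zero hK y (hcone 0 le_rfl _ (hP y).1)
  have h2 := hP.inner_sub_le_zero hK y (hcone 2 zero_le_two _ (hP y).1)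
  rw [zero_smul, zero_sub, inner_neg_right] at h0
  rw [two_smul, add_sub_cancel_right] at h2
  linarith

theorem norm_apply_sub_sq (hP : IsMetricProjection K P) (hK : Convex ℝ K)
    (hcone : ∀ c : ℝ, 0 ≤ c → ∀ x ∈ K, c • x ∈ K) (y v : E) :
    ‖P y - v‖ ^ 2 = ‖y - v‖ ^ 2 - ‖y - P y‖ ^ 2 + 2 * ⟪y - P y, v⟫_ℝ := by
  have h : ⟪y - v, y - P y⟫_ℝ = ‖y - P y‖ ^ 2 - ⟪y - P y, v⟫_ℝ := by
    rw [show y - v = (y - P y) + P y - v by abel, inner_sub_left, inner_add_left,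
      real_inner_self_eq_norm_sq, real_inner_comm (y - P y) (P y),
      hP.inner_sub_self_eq_zero hK hcone, add_zero, real_inner_comm]
  rw [show P y - v = (y - v) - (y - P y) by abel, norm_sub_sq_real, h]
  ring

theorem monotoneOn_norm_apply_smul_add_sub_smul_sq (hP : IsMetricProjection K P)
    (hK : Convex ℝ K) (hcone : ∀ c : ℝ, 0 ≤ c → ∀ x ∈ K, c • x ∈ K) (μ z : E) :
    MonotoneOn (fun t : ℝ => ‖P (t • μ + z) - t • μ‖ ^ 2) (Set.Ici 0) := by
  intro s hs t _ hst
  have hsub := hP.norm_sub_sq_add_two_inner_le hK (t • μ + z) (s • μ + z)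
  have hmono := hP.monotone_inner_sub_apply_smul_add hK μ z hst
  have hs_mono := mul_nonneg (Set.mem_Ici.1 hs) (sub_nonneg.2 hmono)
  rw [add_sub_add_right_eq_sub, ← sub_smul, real_inner_smul_right] at hsub
  simp only [hP.norm_apply_sub_sq hK hcone, add_sub_cancel_left, real_inner_smul_right]
  linarith

end IsMetricProjection

theorem isMetricProjection_toLp_comp {ι : Type*} [Fintype ι] {K : Set (ι → ℝ)}
    {η : (ι → ℝ) → ι → ℝ}
    (h : ∀ y, η y ∈ K ∧ ∀ x ∈ K, ∑ i, (y i - η y i) ^ 2 ≤ ∑ i, (y i - x i) ^ 2) :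
    IsMetricProjection (ofLp ⁻¹' K) fun y : EuclideanSpace ℝ ι => toLp 2 (η (ofLp y)) := by
  refine fun y => ⟨(h _).1, fun x hx => ?_⟩
  rw [← sq_le_sq₀ (norm_nonneg _) (norm_nonneg _)]
  simpa [EuclideanSpace.real_norm_sq_eq] using (h (ofLp y)).2 _ hx

theorem convex_monoCone (N : ℕ) : Convex ℝ (monoCone N) :=
  fun _ hx _ hy _ _ ha hb _ => (hx.const_mul ha).add (hy.const_mul hb)

theorem smul_mem_monoCone {N : ℕ} {c : ℝ} (hc : 0 ≤ c) {x : Fin N → ℝ} (hx : x ∈ monoCone N) :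
    c • x ∈ monoCone N :=
  hx.const_mul hc

theorem monoReg_risk_monotone_general
    (N : ℕ) (η : (Fin N → ℝ) → (Fin N → ℝ))
    (hproj : ∀ y : Fin N → ℝ, η y ∈ monoCone N ∧
      ∀ x ∈ monoCone N, (∑ i, (y i - η y i) ^ 2) ≤ ∑ i, (y i - x i) ^ 2)
    (μ : Fin N → ℝ) :
    ∀ s t : ℝ, 0 ≤ s → s ≤ t →
      (∫⁻ z, ENNReal.ofReal (∑ i, (η (s • μ + z) i - (s • μ) i) ^ 2)
          ∂(stdGaussian N)) ≤
      (∫⁻ z, ENNReal.ofReal (∑ i, (η (t • μ + z) i - (t • μ) i) ^ 2)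
          ∂(stdGaussian N)) := by
  intro s t hs hst
  have hP := isMetricProjection_toLp_comp hproj
  have hK : Convex ℝ (ofLp ⁻¹' monoCone N) :=
    (convex_monoCone N).linear_preimage (WithLp.linearEquiv 2 ℝ (Fin N → ℝ)).toLinearMap
  have hcone (c : ℝ) (hc : 0 ≤ c) (x : EuclideanSpace ℝ (Fin N)) (hx : x ∈ ofLp ⁻¹' monoCone N) :
      c • x ∈ ofLp ⁻¹' monoCone N :=
    smul_mem_monoCone hc hx
  refine lintegral_mono fun z => ENNReal.ofReal_le_ofReal ?_
  simpa [EuclideanSpace.real_norm_sq_eq] using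
    hP.monotoneOn_norm_apply_smul_add_sub_smul_sq hK hcone (toLp 2 μ) (toLp 2 z) hs
      (hs.trans hst) hst

/-- **Monotonicity of the monotone-regression risk along rays.**
Let `η` be the Euclidean projection onto the monotone cone `M_N`, i.e. for
every `y` the point `η y` lies in `M_N` and minimizes `‖y − x‖₂²` over
`x ∈ M_N`.  Then for every `μ ∈ M_N` the risk
`R_N(tμ) = E ‖η(tμ + Z) − tμ‖₂²` is monotone nondecreasing in `t ∈ [0,∞)`. -/
theorem monoReg_risk_monotone
    (N : ℕ) (η : (Fin N → ℝ) → (Fin N → ℝ)) (hmeas : Measurable η)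
    (hproj : ∀ y : Fin N → ℝ, η y ∈ monoCone N ∧
      ∀ x ∈ monoCone N, (∑ i, (y i - η y i) ^ 2) ≤ ∑ i, (y i - x i) ^ 2)
    (μ : Fin N → ℝ) (hμ : μ ∈ monoCone N) :
    ∀ s t : ℝ, 0 ≤ s → s ≤ t →
      (∫⁻ z, ENNReal.ofReal (∑ i, (η (s • μ + z) i - (s • μ) i) ^ 2)
          ∂(stdGaussian N)) ≤
      (∫⁻ z, ENNReal.ofReal (∑ i, (η (t • μ + z) i - (t • μ) i) ^ 2)
          ∂(stdGaussian N)) :=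
  monoReg_risk_monotone_general N η hproj μ
end
end

section
/- Let η^tv(·;τ): ℝ^N → ℝ^N be the total variation denoiser, η^tv(y;τ) = argmin_{x∈ℝ^N} { ½‖y − x‖₂² + τ‖x‖_TV } where ‖x‖_TV = Σ_{i=1}^{N−1}|x_{i+1} − x_i| (the minimizer exists and is unique by strict convexity). Define R_N(μ;τ) = E ‖η^tv(μ + Z;τ) − μ‖₂² with Z ∼ N(0, I_N). Then for every μ ∈ ℝ^N and every τ ≥ 0, the function t ↦ R_N(tμ;τ) is monotone nondecreasing on [0,∞). -/
open MeasureTheory ProbabilityTheory ENNReal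

noncomputable section

/-- Extension of `x : ℝ^N` to `ℕ` by zero. -/
def extz (N : ℕ) (x : Fin N → ℝ) : ℕ → ℝ := fun i => if h : i < N then x ⟨i, h⟩ else 0

/-- The discrete total variation `‖x‖_TV = Σ_{i=1}^{N−1} |x_{i+1} − x_i|`. -/
def tvNorm (N : ℕ) (x : Fin N → ℝ) : ℝ :=
  ∑ i ∈ Finset.range (N - 1), |extz N x (i + 1) - extz N x i|

/-!
The TV denoiser is the proximal map `p` of `τ‖·‖_TV`, a positively homogeneous convex function.
For such `p`, `y ↦ ½‖p y‖²` is convex with gradient `p`, and `p` is 1-Lipschitz. For fixed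
noise `z`, these two facts give `r a ≤ r b + ‖μ‖² (b - a)²` for `r t = ‖p (t μ + z) - t μ‖²`
and `0 ≤ a ≤ b`, and an error that is quadratic in the step disappears on subdividing `[a, b]`.
So the risk is monotone already before averaging over the noise.
-/

open Filter Topology Set WithLp
open scoped RealInnerProductSpace

theorem monotoneOn_of_le_add_mul_sq {s : Set ℝ} (hs : s.OrdConnected) {f : ℝ → ℝ} {C : ℝ}
    (h : ∀ a ∈ s, ∀ b ∈ s, a ≤ b → f a ≤ f b + C * (b - a) ^ 2) : MonotoneOn f s := by
  intro a ha b hb hab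
  -- Subdividing `[a, b]` into `n` steps of length `δ` costs only `n * C * δ ^ 2 = C (b - a)² / n`.
  have hstep (n : ℕ) (hn : 0 < n) : f a - f b ≤ C * (b - a) ^ 2 / n := by
    set δ := (b - a) / n
    have hn' : (0 : ℝ) < n := Nat.cast_pos.mpr hn
    have hδ : 0 ≤ δ := div_nonneg (sub_nonneg.mpr hab) hn'.le
    have hend : a + n * δ = b := by simp only [δ]; field_simp; ring
    have hmem (k : ℕ) (hk : k ≤ n) : a + k * δ ∈ s := by
      refine hs.out ha hb ⟨le_add_of_nonneg_right (by positivity), ?_⟩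
      rw [← hend]; gcongr
    calc f a - f b = ∑ k ∈ Finset.range n, (f (a + k * δ) - f (a + (k + 1 : ℕ) * δ)) := by
          rw [Finset.sum_range_sub' (fun k : ℕ => f (a + k * δ)), hend, Nat.cast_zero, zero_mul,
            add_zero]
      _ ≤ ∑ _k ∈ Finset.range n, C * δ ^ 2 := by
          refine Finset.sum_le_sum fun k hk => ?_
          have hk := Finset.mem_range.mp hk
          have := h _ (hmem k hk.le) _ (hmem (k + 1) hk) (by push_cast; linarith)
          have hsub : a + ((k + 1 : ℕ) : ℝ) * δ - (a + k * δ) = δ := by push_cast; ring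
          rw [hsub] at this
          linarith
      _ = C * (b - a) ^ 2 / n := by
          simp only [δ, Finset.sum_const, Finset.card_range, nsmul_eq_mul]; field_simp
  have hlim : Tendsto (fun n : ℕ => C * (b - a) ^ 2 / n) atTop (𝓝 0) :=
    tendsto_const_div_atTop_nhds_zero_nat _
  have := ge_of_tendsto hlim (eventually_atTop.mpr ⟨1, fun n hn => hstep n hn⟩)
  linarith

def IsProx {E : Type*} [NormedAddCommGroup E] (f : E → ℝ) (p : E → E) : Prop :=
  ∀ y x, 1 / 2 * ‖y - p y‖ ^ 2 + f (p y) ≤ 1 / 2 * ‖y - x‖ ^ 2 + f x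

namespace IsProx

variable {E : Type*} [NormedAddCommGroup E] [InnerProductSpace ℝ E] {f : E → ℝ} {p : E → E}

theorem add_inner_le (hp : IsProx f p) (hf : ConvexOn ℝ univ f) (y x : E) :
    f (p y) + ⟪y - p y, x - p y⟫ ≤ f x := by
  set u := y - p y
  set v := x - p y
  -- Compare with the competitor `p y + t • v` and let `t → 0⁺`.
  have hsmall : ∀ t ∈ Ioc (0 : ℝ) 1, f (p y) + ⟪u, v⟫ - f x ≤ t * (‖v‖ ^ 2 / 2) := by
    rintro t ⟨ht0, ht1⟩
    have hmin := hp y (p y + t • v)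
    have hnorm : ‖y - (p y + t • v)‖ ^ 2 = ‖u‖ ^ 2 - 2 * t * ⟪u, v⟫ + t ^ 2 * ‖v‖ ^ 2 := by
      rw [show y - (p y + t • v) = u - t • v by simp only [u]; abel, norm_sub_sq_real,
        inner_smul_right, norm_smul, Real.norm_of_nonneg ht0.le]
      ring
    have hconv : f (p y + t • v) ≤ (1 - t) * f (p y) + t * f x := by
      have := hf.2 (mem_univ (p y)) (mem_univ x) (sub_nonneg.mpr ht1) ht0.le (by ring)
      rwa [show (1 - t) • p y + t • x = p y + t • v by
        simp only [v, smul_sub, sub_smul, one_smul]; abel] at this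
    rw [hnorm] at hmin
    have : t * (f (p y) + ⟪u, v⟫ - f x) ≤ t * (t * (‖v‖ ^ 2 / 2)) := by nlinarith
    exact le_of_mul_le_mul_left this ht0
  have hlim : Tendsto (fun t : ℝ => t * (‖v‖ ^ 2 / 2)) (𝓝[>] 0) (𝓝 0) :=
    ((continuous_id.mul continuous_const).tendsto' 0 0 (zero_mul _)).mono_left
      nhdsWithin_le_nhds
  have := ge_of_tendsto hlim (Filter.mem_of_superset (Ioc_mem_nhdsGT zero_lt_one) hsmall)
  linarith

theorem norm_sub_sq_le_inner (hp : IsProx f p) (hf : ConvexOn ℝ univ f) (y y' : E) :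
    ‖p y' - p y‖ ^ 2 ≤ ⟪y' - y, p y' - p y⟫ := by
  have h := hp.add_inner_le hf y (p y')
  have h' := hp.add_inner_le hf y' (p y)
  have hsum : ⟪y - p y, p y' - p y⟫ + ⟪y' - p y', p y - p y'⟫ =
      ‖p y' - p y‖ ^ 2 - ⟪y' - y, p y' - p y⟫ := by
    rw [← neg_sub (p y') (p y), inner_neg_right, ← sub_eq_add_neg, ← inner_sub_left,
      show y - p y - (y' - p y') = (p y' - p y) - (y' - y) by abel, inner_sub_left,
      real_inner_self_eq_norm_sq]
  linarith

theorem norm_sub_le (hp : IsProx f p) (hf : ConvexOn ℝ univ f) (y y' : E) :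
    ‖p y' - p y‖ ≤ ‖y' - y‖ := by
  have h := (hp.norm_sub_sq_le_inner hf y y').trans (real_inner_le_norm _ _)
  nlinarith [norm_nonneg (p y' - p y), norm_nonneg (y' - y)]

variable (hhom : ∀ c : ℝ, 0 ≤ c → ∀ x, f (c • x) = c * f x)
include hhom

theorem apply_eq_inner (hp : IsProx f p) (hf : ConvexOn ℝ univ f) (y : E) :
    f (p y) = ⟪y - p y, p y⟫ := by
  have h0 := hp.add_inner_le hf y 0
  have h2 := hp.add_inner_le hf y ((2 : ℝ) • p y)
  have hf0 : f 0 = 0 := by simpa using hhom 0 le_rfl 0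
  rw [hf0, zero_sub, inner_neg_right] at h0
  rw [hhom 2 zero_le_two, two_smul, add_sub_cancel_right] at h2
  linarith

theorem inner_le (hp : IsProx f p) (hf : ConvexOn ℝ univ f) (y x : E) :
    ⟪y - p y, x⟫ ≤ f x := by
  have h := hp.add_inner_le hf y x
  rw [inner_sub_right, ← hp.apply_eq_inner hhom hf] at h
  linarith

/-- `p` is the gradient of the convex function `y ↦ ½‖p y‖²`. -/
theorem norm_sq_add_inner_le (hp : IsProx f p) (hf : ConvexOn ℝ univ f) (y y' : E) :
    ‖p y‖ ^ 2 + 2 * ⟪p y, y' - y⟫ ≤ ‖p y'‖ ^ 2 := by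
  have h := hp.inner_le hhom hf y' (p y)
  rw [hp.apply_eq_inner hhom hf] at h
  have hsq := sq_nonneg ‖p y' - p y‖
  rw [norm_sub_sq_real] at hsq
  simp only [inner_sub_left, inner_sub_right, real_inner_self_eq_norm_sq] at h ⊢
  linarith [real_inner_comm (p y) y, real_inner_comm (p y) y']

theorem norm_sub_smul_sq_le (hp : IsProx f p) (hf : ConvexOn ℝ univ f) (μ z : E) {a b : ℝ}
    (hb : 0 ≤ b) (hab : a ≤ b) :
    ‖p (a • μ + z) - a • μ‖ ^ 2 ≤ ‖p (b • μ + z) - b • μ‖ ^ 2 + ‖μ‖ ^ 2 * (b - a) ^ 2 := by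
  set q := p (a • μ + z)
  set q' := p (b • μ + z)
  have hy : b • μ + z - (a • μ + z) = (b - a) • μ := by rw [sub_smul]; abel
  have hgrad := hp.norm_sq_add_inner_le hhom hf (a • μ + z) (b • μ + z)
  rw [hy, inner_smul_right] at hgrad
  have hlip : ⟪μ, q' - q⟫ ≤ (b - a) * ‖μ‖ ^ 2 := by
    have h := hp.norm_sub_le hf (a • μ + z) (b • μ + z)
    rw [hy, norm_smul, Real.norm_of_nonneg (sub_nonneg.mpr hab)] at h
    calc ⟪μ, q' - q⟫ ≤ ‖μ‖ * ‖q' - q‖ := real_inner_le_norm _ _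
      _ ≤ ‖μ‖ * ((b - a) * ‖μ‖) := by gcongr
      _ = (b - a) * ‖μ‖ ^ 2 := by ring
  have hexpand (t : ℝ) (w : E) :
      ‖w - t • μ‖ ^ 2 = ‖w‖ ^ 2 - 2 * t * ⟪w, μ⟫ + t ^ 2 * ‖μ‖ ^ 2 := by
    rw [norm_sub_sq_real, inner_smul_right, norm_smul, mul_pow, Real.norm_eq_abs, sq_abs]; ring
  rw [hexpand, hexpand]
  rw [inner_sub_right, real_inner_comm q', real_inner_comm q] at hlip
  linarith [mul_le_mul_of_nonneg_left hlip hb]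

theorem monotoneOn_norm_sub_smul_sq (hp : IsProx f p) (hf : ConvexOn ℝ univ f) (μ z : E) :
    MonotoneOn (fun t : ℝ => ‖p (t • μ + z) - t • μ‖ ^ 2) (Ici 0) :=
  monotoneOn_of_le_add_mul_sq ordConnected_Ici fun _ _ _ hb hab =>
    hp.norm_sub_smul_sq_le hhom hf μ z hb hab

end IsProx

theorem extz_add {N : ℕ} (x y : Fin N → ℝ) (i : ℕ) :
    extz N (x + y) i = extz N x i + extz N y i := by
  unfold extz; split_ifs <;> simp

theorem extz_smul {N : ℕ} (c : ℝ) (x : Fin N → ℝ) (i : ℕ) :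
    extz N (c • x) i = c * extz N x i := by
  unfold extz; split_ifs <;> simp

theorem tvNorm_add_le {N : ℕ} (x y : Fin N → ℝ) :
    tvNorm N (x + y) ≤ tvNorm N x + tvNorm N y := by
  unfold tvNorm
  rw [← Finset.sum_add_distrib]
  refine Finset.sum_le_sum fun i _ => ?_
  simp only [extz_add]
  exact (abs_add_le _ _).trans_eq' (by ring_nf)

theorem tvNorm_smul {N : ℕ} (c : ℝ) (x : Fin N → ℝ) : tvNorm N (c • x) = ‖c‖ * tvNorm N x := by
  simp only [tvNorm, extz_smul, ← mul_sub, abs_mul, Finset.mul_sum, Real.norm_eq_abs]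

def tvSeminorm (N : ℕ) : Seminorm ℝ (Fin N → ℝ) :=
  Seminorm.of (tvNorm N) tvNorm_add_le tvNorm_smul

@[simp]
theorem coe_tvSeminorm (N : ℕ) : ⇑(tvSeminorm N) = tvNorm N := rfl

theorem tv_risk_monotone_general
    (N : ℕ) (η : ℝ → (Fin N → ℝ) → (Fin N → ℝ))
    (hη : ∀ τ : ℝ, 0 ≤ τ → ∀ y x : Fin N → ℝ,
      (1 / 2) * (∑ i, (y i - η τ y i) ^ 2) + τ * tvNorm N (η τ y) ≤
      (1 / 2) * (∑ i, (y i - x i) ^ 2) + τ * tvNorm N x)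
    (μ : Fin N → ℝ) (τ : ℝ) (hτ : 0 ≤ τ) :
    ∀ s t : ℝ, 0 ≤ s → s ≤ t →
      (∫⁻ z, ENNReal.ofReal (∑ i, (η τ (s • μ + z) i - (s • μ) i) ^ 2)
          ∂(stdGaussian N)) ≤
      (∫⁻ z, ENNReal.ofReal (∑ i, (η τ (t • μ + z) i - (t • μ) i) ^ 2)
          ∂(stdGaussian N)) := by
  intro s t hs hst
  refine lintegral_mono fun z => ENNReal.ofReal_le_ofReal ?_
  let q := (tvSeminorm N).comp (WithLp.linearEquiv 2 ℝ (Fin N → ℝ)).toLinearMap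
  let p : EuclideanSpace ℝ (Fin N) → EuclideanSpace ℝ (Fin N) := fun y => toLp 2 (η τ (ofLp y))
  have hp : IsProx (fun x => τ * q x) p := fun y x => by
    simpa [p, q, EuclideanSpace.real_norm_sq_eq] using hη τ hτ (ofLp y) (ofLp x)
  have hhom (c : ℝ) (hc : 0 ≤ c) (x : EuclideanSpace ℝ (Fin N)) :
      τ * q (c • x) = c * (τ * q x) := by
    rw [map_smul_eq_mul, Real.norm_of_nonneg hc]; ring
  have hmono := hp.monotoneOn_norm_sub_smul_sq hhom (q.convexOn.smul hτ) (toLp 2 μ) (toLp 2 z)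
    hs (hs.trans hst) hst
  simpa [p, EuclideanSpace.real_norm_sq_eq] using hmono

/-- **Monotonicity of the TV-denoising risk along rays.**
Let `η τ` be the total variation denoiser, i.e. for every `y`, `η τ y`
minimizes `½‖y − x‖₂² + τ‖x‖_TV` over `x ∈ ℝ^N`.  Then for every `μ ∈ ℝ^N`
and `τ ≥ 0`, the risk `R_N(tμ;τ) = E ‖η(tμ + Z;τ) − tμ‖₂²` is monotone
nondecreasing in `t ∈ [0,∞)`. -/
theorem tv_risk_monotone
    (N : ℕ) (η : ℝ → (Fin N → ℝ) → (Fin N → ℝ))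
    (hmeas : ∀ τ : ℝ, Measurable (η τ))
    (hη : ∀ τ : ℝ, 0 ≤ τ → ∀ y x : Fin N → ℝ,
      (1 / 2) * (∑ i, (y i - η τ y i) ^ 2) + τ * tvNorm N (η τ y) ≤
      (1 / 2) * (∑ i, (y i - x i) ^ 2) + τ * tvNorm N x)
    (μ : Fin N → ℝ) (τ : ℝ) (hτ : 0 ≤ τ) :
    ∀ s t : ℝ, 0 ≤ s → s ≤ t →
      (∫⁻ z, ENNReal.ofReal (∑ i, (η τ (s • μ + z) i - (s • μ) i) ^ 2)
          ∂(stdGaussian N)) ≤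
      (∫⁻ z, ENNReal.ofReal (∑ i, (η τ (t • μ + z) i - (t • μ) i) ^ 2)
          ∂(stdGaussian N)) :=
  tv_risk_monotone_general N η hη μ τ hτ
end
end

section
/- Fix N-indexed denoisers η_N(·;τ,σ): ℝ^N → ℝ^N obeying the scaling relation η_N(y;τ,σ) = σ·η_N(y/σ;τ,1) for all σ > 0, a fixed parameter τ, and a sequence ν = (ν_N) of Borel probability measures on ℝ^N such that for every σ > 0 the limit G(σ) = lim_{N→∞} (1/N) E_{ν_N} ‖X − η_N(X + σZ; τ, σ)‖₂² exists (X ∼ ν_N, Z ∼ N(0,I_N) independent). For δ > 0 define the state evolution map Ψ(m;δ) = G(√(m/δ)) for m > 0, the highest fixed point HFP(δ) = sup{ m > 0 : Ψ(m;δ) ≥ m } (with sup ∅ = 0), and δ_SE(τ,ν) = inf{ δ ≥ 0 : HFP(δ) = 0 }. Then δ_SE(τ,ν) = M(τ,ν), where M(τ,ν) = sup_{σ>0} G(σ)/σ². -/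
open MeasureTheory ProbabilityTheory ENNReal Filter

noncomputable section

/-- **State evolution threshold equals worst-case normalized MSE.**
Fix denoisers `η N τ σ : ℝ^N → ℝ^N` obeying the scaling relation
`η(y;τ,σ) = σ·η(y/σ;τ,1)`, a fixed parameter `τ`, and a sequence `ν N` of
probability measures such that for every `σ > 0` the per-coordinate
asymptotic MSE `G(σ) = lim_N (1/N) E ‖X − η(X + σZ;τ,σ)‖₂²` exists.
With `Ψ(m;δ) = G(√(m/δ))`, `HFP(δ) = sup{m > 0 : Ψ(m;δ) ≥ m}` (`sup ∅ = 0`)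
and `δ_SE(τ,ν) = inf{δ > 0 : HFP(δ) = 0}`, one has
`δ_SE(τ,ν) = M(τ,ν) = sup_{σ>0} G(σ)/σ²`. -/
theorem deltaSE_eq_normalizedMSE
    {Θ : Type*} (τ : Θ)
    (η : ∀ N : ℕ, Θ → ℝ → (Fin N → ℝ) → (Fin N → ℝ))
    (hscale : ∀ (N : ℕ) (τ' : Θ) (σ : ℝ) (y : Fin N → ℝ), 0 < σ →
      η N τ' σ y = σ • η N τ' 1 (σ⁻¹ • y))
    (ν : ∀ N : ℕ, Measure (Fin N → ℝ))
    (hν : ∀ N, IsProbabilityMeasure (ν N))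
    (G : ℝ → ℝ≥0∞)
    (hG : ∀ σ : ℝ, 0 < σ →
      Tendsto (fun N : ℕ => (N : ℝ≥0∞)⁻¹ *
          ∫⁻ p, ENNReal.ofReal (∑ i, (p.1 i - η N τ σ (p.1 + σ • p.2) i) ^ 2)
            ∂((ν N).prod (stdGaussian N)))
        atTop (nhds (G σ))) :
    (⨅ (δ : ℝ) (_ : 0 < δ ∧
        (⨆ (m : ℝ) (_ : 0 < m ∧ ENNReal.ofReal m ≤ G (Real.sqrt (m / δ))),
          ENNReal.ofReal m) = 0),
      ENNReal.ofReal δ) =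
    ⨆ (σ : ℝ) (_ : 0 < σ), G σ / ENNReal.ofReal (σ ^ 2) := by
  have hden0 : ∀ σ : ℝ, 0 < σ → ENNReal.ofReal (σ ^ 2) ≠ 0 := by
    intro σ hσ
    simp only [ne_eq, ENNReal.ofReal_eq_zero, not_le]
    positivity
  have key : ∀ δ : ℝ, 0 < δ →
      ((⨆ (m : ℝ) (_ : 0 < m ∧ ENNReal.ofReal m ≤ G (Real.sqrt (m / δ))),
          ENNReal.ofReal m) = 0 ↔
        ∀ σ : ℝ, 0 < σ → G σ < ENNReal.ofReal δ * ENNReal.ofReal (σ ^ 2)) := by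
    intro δ hδ
    constructor
    · intro h σ hσ
      by_contra hcon
      push_neg at hcon
      have hm : 0 < δ * σ ^ 2 := by positivity
      have hsqrt : Real.sqrt (δ * σ ^ 2 / δ) = σ := by
        rw [mul_div_cancel_left₀ _ (ne_of_gt hδ), Real.sqrt_sq hσ.le]
      have hle : ENNReal.ofReal (δ * σ ^ 2) ≤ G (Real.sqrt (δ * σ ^ 2 / δ)) := by
        rw [hsqrt, ENNReal.ofReal_mul hδ.le]; exact hcon
      have h2 := le_iSup₂ (f := fun (m : ℝ)
          (_ : 0 < m ∧ ENNReal.ofReal m ≤ G (Real.sqrt (m / δ))) => ENNReal.ofReal m)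
        (δ * σ ^ 2) ⟨hm, hle⟩
      rw [h, le_zero_iff, ENNReal.ofReal_eq_zero] at h2
      linarith
    · intro h
      simp only [ENNReal.iSup_eq_zero]
      rintro m ⟨hm, hle⟩
      exfalso
      have hσ : 0 < Real.sqrt (m / δ) := Real.sqrt_pos.mpr (by positivity)
      have hsq : Real.sqrt (m / δ) ^ 2 = m / δ := Real.sq_sqrt (by positivity)
      have := h _ hσ
      rw [hsq, ← ENNReal.ofReal_mul hδ.le, mul_div_cancel₀ _ (ne_of_gt hδ)] at this
      exact absurd hle (not_le.mpr this)
  apply le_antisymm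
  · set B := ⨆ (σ : ℝ) (_ : 0 < σ), G σ / ENNReal.ofReal (σ ^ 2) with hB
    refine ENNReal.le_of_forall_pos_le_add fun ε hε hBtop => ?_
    have hεR : (0 : ℝ) < (ε : ℝ) := by exact_mod_cast hε
    set δ := B.toReal + (ε : ℝ) with hδdef
    have hδpos : 0 < δ := by
      have := ENNReal.toReal_nonneg (a := B); positivity
    have hofδ : ENNReal.ofReal δ = B + (ε : ℝ≥0∞) := by
      rw [hδdef, ENNReal.ofReal_add ENNReal.toReal_nonneg hεR.le,
        ENNReal.ofReal_toReal hBtop.ne, ENNReal.ofReal_coe_nnreal]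
    have hcond : ∀ σ : ℝ, 0 < σ → G σ < ENNReal.ofReal δ * ENNReal.ofReal (σ ^ 2) := by
      intro σ hσ
      have h1 : G σ / ENNReal.ofReal (σ ^ 2) ≤ B :=
        le_iSup₂ (f := fun (σ : ℝ) (_ : 0 < σ) => G σ / ENNReal.ofReal (σ ^ 2)) σ hσ
      have h2 : G σ / ENNReal.ofReal (σ ^ 2) < ENNReal.ofReal δ := by
        rw [hofδ]
        exact h1.trans_lt (ENNReal.lt_add_right hBtop.ne
          (by exact_mod_cast hε.ne'))
      rwa [ENNReal.div_lt_iff (Or.inl (hden0 σ hσ)) (Or.inl ENNReal.ofReal_ne_top)] at h2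
    calc (⨅ (δ' : ℝ) (_ : 0 < δ' ∧
        (⨆ (m : ℝ) (_ : 0 < m ∧ ENNReal.ofReal m ≤ G (Real.sqrt (m / δ'))),
          ENNReal.ofReal m) = 0), ENNReal.ofReal δ')
        ≤ ENNReal.ofReal δ :=
          iInf₂_le δ ⟨hδpos, (key δ hδpos).mpr hcond⟩
      _ = B + ε := hofδ
  · refine iSup₂_le fun σ hσ => le_iInf₂ fun δ hδ => ?_
    obtain ⟨hδpos, hzero⟩ := hδ
    have h := (key δ hδpos).mp hzero σ hσ
    exact le_of_lt (by
      rwa [ENNReal.div_lt_iff (Or.inl (hden0 σ hσ)) (Or.inl ENNReal.ofReal_ne_top)])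
end
end

section
/- Let J: ℝ^N → ℝ be convex, A a real n×N matrix, y ∈ ℝ^n, θ > 0, and b ∈ ℝ with b < 1. Suppose x* ∈ ℝ^N and z* ∈ ℝ^n satisfy the AMP fixed-point equations z* = y − Ax* + b·z* and x* is the (unique) minimizer over x ∈ ℝ^N of ½‖(x* + Aᵀz*) − x‖₂² + θ·J(x). Then, setting λ = θ(1 − b), the point x* is a global minimizer over ℝ^N of the penalized least-squares objective x ↦ ½‖y − Ax‖₂² + λ·J(x). -/
/-- **AMP fixed points are minimizers of the penalized least-squares
problem.**  Let `J` be convex, and suppose `(x*, z*)` satisfies the AMP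
fixed-point equations: `z* = y − Ax* + b z*` and `x*` minimizes
`½‖(x* + Aᵀz*) − x‖₂² + θ J(x)` (i.e. `x*` is the proximal point of
`θJ` at `x* + Aᵀz*`).  Then with `λ = θ(1−b)`, `x*` is a global minimizer of
`x ↦ ½‖y − Ax‖₂² + λ J(x)`. -/
theorem amp_fixed_point_is_minimizer
    {n N : ℕ} (J : (Fin N → ℝ) → ℝ) (hJ : ConvexOn ℝ Set.univ J)
    (A : Matrix (Fin n) (Fin N) ℝ) (y : Fin n → ℝ)
    (θ : ℝ) (hθ : 0 < θ) (b : ℝ) (hb : b < 1)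
    (xstar : Fin N → ℝ) (zstar : Fin n → ℝ)
    (hz : zstar = y - A.mulVec xstar + b • zstar)
    (hx : ∀ x : Fin N → ℝ,
      (1 / 2) * (∑ i, ((xstar i + A.transpose.mulVec zstar i) - xstar i) ^ 2)
          + θ * J xstar ≤
      (1 / 2) * (∑ i, ((xstar i + A.transpose.mulVec zstar i) - x i) ^ 2)
          + θ * J x) :
    ∀ x : Fin N → ℝ,
      (1 / 2) * (∑ j, (y j - A.mulVec xstar j) ^ 2) + (θ * (1 - b)) * J xstar ≤
      (1 / 2) * (∑ j, (y j - A.mulVec x j) ^ 2) + (θ * (1 - b)) * J x := by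
  intro x
  have hyz : ∀ j, y j - A.mulVec xstar j = (1 - b) * zstar j := by
    intro j
    have h := congrFun hz j
    simp only [Pi.add_apply, Pi.sub_apply, Pi.smul_apply, smul_eq_mul] at h
    linarith
  set u : Fin N → ℝ := A.transpose.mulVec zstar with hu
  set D : ℝ := ∑ i, (x i - xstar i) ^ 2 with hD
  set S : ℝ := ∑ i, u i * (x i - xstar i) with hSdef
  have hD0 : 0 ≤ D := Finset.sum_nonneg fun i _ => sq_nonneg _
  have key : ∀ t : ℝ, 0 < t → t ≤ 1 →
      S ≤ θ * J x - θ * J xstar + t * D / 2 := by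
    intro t ht ht1
    have hconv := hJ.2 (Set.mem_univ xstar) (Set.mem_univ x)
      (by linarith : (0:ℝ) ≤ 1 - t) (le_of_lt ht) (by ring)
    have hxt := hx (fun i => xstar i + t * (x i - xstar i))
    have hpt : (fun i => xstar i + t * (x i - xstar i))
        = (1 - t) • xstar + t • x := by
      funext i
      simp only [Pi.add_apply, Pi.smul_apply, smul_eq_mul]
      ring
    have e1 : ∑ i, ((xstar i + u i) - xstar i) ^ 2 = ∑ i, (u i) ^ 2 := by
      apply Finset.sum_congr rfl; intro i _; ring
    have e2 : ∑ i, ((xstar i + u i) - (xstar i + t * (x i - xstar i))) ^ 2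
        = ∑ i, (u i) ^ 2 - 2 * t * S + t ^ 2 * D := by
      rw [hSdef, hD, Finset.mul_sum, Finset.mul_sum, ← Finset.sum_sub_distrib,
        ← Finset.sum_add_distrib]
      apply Finset.sum_congr rfl; intro i _; ring
    rw [e1, e2, hpt] at hxt
    have hJt : θ * J ((1 - t) • xstar + t • x)
        ≤ θ * ((1 - t) * J xstar + t * J x) :=
      mul_le_mul_of_nonneg_left hconv (le_of_lt hθ)
    have h2 : t * S ≤ t * (θ * J x - θ * J xstar + t * D / 2) := by nlinarith
    exact le_of_mul_le_mul_left h2 ht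
  have hsub : S ≤ θ * J x - θ * J xstar := by
    refine le_of_forall_pos_le_add ?_
    intro ε hε
    have hD1 : (0:ℝ) < D + 1 := by linarith
    have ht : 0 < min 1 (ε / (D + 1)) := lt_min one_pos (div_pos hε hD1)
    have hk := key _ ht (min_le_left _ _)
    have h4 : min 1 (ε / (D + 1)) ≤ ε / (D + 1) := min_le_right _ _
    have h5 : min 1 (ε / (D + 1)) * D ≤ (ε / (D + 1)) * D :=
      mul_le_mul_of_nonneg_right h4 hD0
    have h6 : (ε / (D + 1)) * D ≤ ε := by
      rw [div_mul_eq_mul_div, div_le_iff₀ hD1]; nlinarith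
    linarith
  have hmv : ∀ j, A.mulVec x j = A.mulVec xstar j + A.mulVec (x - xstar) j := by
    intro j
    rw [Matrix.mulVec_sub]
    simp
  have hcross : ∑ j, (y j - A.mulVec xstar j) * (A.mulVec (x - xstar) j)
      = (1 - b) * S := by
    have step1 : ∑ j, (y j - A.mulVec xstar j) * (A.mulVec (x - xstar) j)
        = (1 - b) * ∑ j, zstar j * (A.mulVec (x - xstar) j) := by
      rw [Finset.mul_sum]
      apply Finset.sum_congr rfl
      intro j _
      rw [hyz j]; ring
    rw [step1]
    congr 1
    rw [hSdef]
    simp only [hu, Matrix.mulVec, dotProduct, Matrix.transpose_apply,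
      Pi.sub_apply, Finset.mul_sum, Finset.sum_mul]
    rw [Finset.sum_comm]
    apply Finset.sum_congr rfl
    intro i _
    apply Finset.sum_congr rfl
    intro j _
    ring
  have hexp : ∑ j, (y j - A.mulVec x j) ^ 2
      = ∑ j, (y j - A.mulVec xstar j) ^ 2 - 2 * ((1 - b) * S)
        + ∑ j, (A.mulVec (x - xstar) j) ^ 2 := by
    rw [← hcross, Finset.mul_sum, ← Finset.sum_sub_distrib, ← Finset.sum_add_distrib]
    apply Finset.sum_congr rfl
    intro j _
    rw [hmv j]
    ring
  have hAd : 0 ≤ ∑ j, (A.mulVec (x - xstar) j) ^ 2 :=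
    Finset.sum_nonneg fun j _ => sq_nonneg _
  rw [hexp]
  nlinarith [mul_le_mul_of_nonneg_left hsub (by linarith : (0:ℝ) ≤ 1 - b)]
end

section
/- Let η⁺(y) = max(y,0) be the positive-part denoiser and let F_{1,ε,+} be the set of Borel probability measures ν on [0,∞) with ν({x : x ≠ 0}) ≤ ε. Then for every ε ∈ [0,1], sup_{ν∈F_{1,ε,+}} E[(X − η⁺(X+Z))²] = (1+ε)/2, where X ∼ ν and Z ∼ N(0,1) are independent. -/
open MeasureTheory ProbabilityTheory ENNReal

noncomputable section

/-- The class `F_{1,ε,+}` of Borel probability measures `ν` on `[0,∞)` with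
`ν({x : x ≠ 0}) ≤ ε`. -/
def posSparse (ε : ℝ) : Set (Measure ℝ) :=
  {ν | IsProbabilityMeasure ν ∧ ν {x : ℝ | x < 0} = 0 ∧
    ν {x : ℝ | x ≠ 0} ≤ ENNReal.ofReal ε}

/-!
Let `R x = E (x - η⁺(x + Z))²` be the risk at a fixed signal `x ≥ 0`. By the symmetry of `Z`,
`R 0 = E (Z⁺)² = 1/2`, and clipping at `0` never moves the estimate away from a nonnegative `x`,
so `R x ≤ E Z² = 1`. A prior with mass at most `ε` off zero therefore has Bayes risk at most
`1/2 + ε/2`. Conversely `R x` increases to `1` as `x → ∞` (eventually nothing is clipped), so the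
two-point priors `(1 - ε) δ₀ + ε δₙ` attain the bound in the limit.
-/

open Set

lemma lintegral_sq_sub_gaussianReal (μ : ℝ) (v : NNReal) :
    ∫⁻ x, ENNReal.ofReal ((x - μ) ^ 2) ∂gaussianReal μ v = v := by
  have hvar := variance_eq_integral measurable_id.aemeasurable (μ := gaussianReal μ v)
  simp only [variance_id_gaussianReal, id, integral_id_gaussianReal] at hvar
  have hint : Integrable (fun x : ℝ => (x - μ) ^ 2) (gaussianReal μ v) :=
    ((memLp_id_gaussianReal 2).sub (memLp_const μ)).integrable_sq
  rw [← ofReal_integral_eq_lintegral_ofReal hint (.of_forall fun x => sq_nonneg _), ← hvar,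
    ENNReal.ofReal_coe_nnreal]

lemma lintegral_comp_neg_gaussianReal (v : NNReal) {f : ℝ → ℝ≥0∞} (hf : Measurable f) :
    ∫⁻ x, f (-x) ∂gaussianReal 0 v = ∫⁻ x, f x ∂gaussianReal 0 v := by
  rw [← lintegral_map hf measurable_neg, gaussianReal_map_neg, neg_zero]

lemma lintegral_max_zero_sq_gaussianReal (v : NNReal) :
    ∫⁻ x, ENNReal.ofReal (max x 0 ^ 2) ∂gaussianReal 0 v = v / 2 := by
  have hsplit : ∀ x : ℝ, ENNReal.ofReal (max x 0 ^ 2) + ENNReal.ofReal (max (-x) 0 ^ 2)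
      = ENNReal.ofReal ((x - 0) ^ 2) := fun x => by
    rw [← ENNReal.ofReal_add (sq_nonneg _) (sq_nonneg _)]
    congr 1
    rcases le_total x 0 with hx | hx <;> simp [hx]
  have hmeas : Measurable fun x : ℝ => ENNReal.ofReal (max x 0 ^ 2) := by fun_prop
  rw [ENNReal.eq_div_iff two_ne_zero ENNReal.ofNat_ne_top, two_mul]
  nth_rewrite 2 [← lintegral_comp_neg_gaussianReal v hmeas]
  rw [← lintegral_add_left hmeas, lintegral_congr hsplit, lintegral_sq_sub_gaussianReal]

section PointwiseLoss

variable {x z : ℝ}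

lemma sq_sub_max_add_zero_le_sq (hx : 0 ≤ x) : (x - max (x + z) 0) ^ 2 ≤ z ^ 2 := by
  rcases le_total 0 (x + z) with h | h
  · rw [max_eq_left h]
    nlinarith
  · rw [max_eq_right h]
    nlinarith

lemma sq_sub_max_add_zero_of_neg_le (h : -z ≤ x) : (x - max (x + z) 0) ^ 2 = z ^ 2 := by
  rw [max_eq_left (by linarith)]
  ring

lemma monotoneOn_sq_sub_max_add_zero (z : ℝ) :
    MonotoneOn (fun x => (x - max (x + z) 0) ^ 2) (Ici 0) := by
  intro a (ha : 0 ≤ a) b _ hab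
  dsimp only
  rcases le_total 0 (a + z) with h | h
  · rw [sq_sub_max_add_zero_of_neg_le (by linarith), sq_sub_max_add_zero_of_neg_le (by linarith)]
  · rw [max_eq_right h]
    rcases le_total 0 (b + z) with h' | h'
    · rw [max_eq_left h']
      nlinarith
    · rw [max_eq_right h']
      nlinarith

end PointwiseLoss

def posPartRisk (x : ℝ) : ℝ≥0∞ :=
  ∫⁻ z, ENNReal.ofReal ((x - max (x + z) 0) ^ 2) ∂gaussianReal 0 1

lemma posPartRisk_zero : posPartRisk 0 = 2⁻¹ := by
  simp only [posPartRisk, zero_add, zero_sub, neg_sq]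
  rw [lintegral_max_zero_sq_gaussianReal, ENNReal.coe_one, one_div]

lemma posPartRisk_le_one {x : ℝ} (hx : 0 ≤ x) : posPartRisk x ≤ 1 :=
  calc posPartRisk x ≤ ∫⁻ z, ENNReal.ofReal ((z - 0) ^ 2) ∂gaussianReal 0 1 :=
        lintegral_mono fun z => ENNReal.ofReal_le_ofReal <| by
          simpa using sq_sub_max_add_zero_le_sq hx
    _ = 1 := by rw [lintegral_sq_sub_gaussianReal, ENNReal.coe_one]

lemma iSup_posPartRisk_natCast : ⨆ n : ℕ, posPartRisk n = 1 := by
  have hmono : Monotone fun (n : ℕ) (z : ℝ) => ENNReal.ofReal ((n - max (n + z) 0) ^ 2) :=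
    fun m n hmn z => ENNReal.ofReal_le_ofReal <| monotoneOn_sq_sub_max_add_zero z
      (mem_Ici.2 m.cast_nonneg) (mem_Ici.2 n.cast_nonneg) (Nat.cast_le.2 hmn)
  have hlim : ∀ z : ℝ, ⨆ n : ℕ, ENNReal.ofReal ((n - max (n + z) 0) ^ 2)
      = ENNReal.ofReal ((z - 0) ^ 2) := fun z => by
    obtain ⟨N, hN⟩ := exists_nat_ge (-z)
    refine le_antisymm (iSup_le fun n => ENNReal.ofReal_le_ofReal ?_) (le_iSup_of_le N ?_)
    · simpa using sq_sub_max_add_zero_le_sq (Nat.cast_nonneg n) (z := z)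
    · rw [sq_sub_max_add_zero_of_neg_le hN, sub_zero]
  simp only [posPartRisk]
  rw [← lintegral_iSup (fun n => by fun_prop) hmono, lintegral_congr hlim,
    lintegral_sq_sub_gaussianReal, ENNReal.coe_one]

lemma lintegral_prod_gaussianReal_eq_lintegral_posPartRisk (ν : Measure ℝ) [SFinite ν] :
    ∫⁻ p : ℝ × ℝ, ENNReal.ofReal ((p.1 - max (p.1 + p.2) 0) ^ 2) ∂(ν.prod (gaussianReal 0 1))
      = ∫⁻ x, posPartRisk x ∂ν :=
  lintegral_prod _ (by fun_prop)

lemma posPartRisk_le_indicator {x : ℝ} (hx : 0 ≤ x) :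
    posPartRisk x ≤ 2⁻¹ + 2⁻¹ * ({0}ᶜ : Set ℝ).indicator 1 x := by
  rcases eq_or_ne x 0 with rfl | hx0
  · simp [posPartRisk_zero]
  · simpa [hx0, ENNReal.inv_two_add_inv_two] using posPartRisk_le_one hx

lemma lintegral_posPartRisk_le {ε : ℝ} {ν : Measure ℝ} (hν : ν ∈ posSparse ε) :
    ∫⁻ x, posPartRisk x ∂ν ≤ 2⁻¹ + 2⁻¹ * ENNReal.ofReal ε := by
  obtain ⟨hprob, hneg, hsparse⟩ := hν
  have hnonneg : ∀ᵐ x ∂ν, 0 ≤ x := by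
    simpa only [ae_iff, not_le] using hneg
  calc ∫⁻ x, posPartRisk x ∂ν
      ≤ ∫⁻ x, 2⁻¹ + 2⁻¹ * ({0}ᶜ : Set ℝ).indicator 1 x ∂ν :=
        lintegral_mono_ae (hnonneg.mono fun x => posPartRisk_le_indicator)
    _ = 2⁻¹ + 2⁻¹ * ν {x | x ≠ 0} := by
        rw [lintegral_add_left measurable_const, lintegral_const, measure_univ, mul_one,
          lintegral_const_mul _ (measurable_one.indicator (measurableSet_singleton 0).compl),
          lintegral_indicator_one (measurableSet_singleton 0).compl]
        rfl
    _ ≤ 2⁻¹ + 2⁻¹ * ENNReal.ofReal ε := by gcongr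

def sparseTwoPoint (ε a : ℝ) : Measure ℝ :=
  ENNReal.ofReal (1 - ε) • Measure.dirac 0 + ENNReal.ofReal ε • Measure.dirac a

lemma sparseTwoPoint_mem_posSparse {ε a : ℝ} (hε0 : 0 ≤ ε) (hε1 : ε ≤ 1) (ha : 0 ≤ a) :
    sparseTwoPoint ε a ∈ posSparse ε := by
  refine ⟨⟨?_⟩, ?_, ?_⟩ <;> simp only [sparseTwoPoint, Measure.add_apply, Measure.smul_apply,
    smul_eq_mul]
  · rw [measure_univ, measure_univ, mul_one, mul_one, ← ENNReal.ofReal_add (by linarith) hε0]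
    norm_num
  · simp [not_lt.2 ha]
  · simpa using mul_le_of_le_one_right' (prob_le_one (μ := Measure.dirac a))

lemma lintegral_posPartRisk_sparseTwoPoint (ε a : ℝ) :
    ∫⁻ x, posPartRisk x ∂sparseTwoPoint ε a
      = ENNReal.ofReal (1 - ε) * 2⁻¹ + ENNReal.ofReal ε * posPartRisk a := by
  rw [sparseTwoPoint, lintegral_add_measure, lintegral_smul_measure, lintegral_smul_measure,
    lintegral_dirac, lintegral_dirac, posPartRisk_zero, smul_eq_mul, smul_eq_mul]

/-- **Minimax MSE of the positive-part denoiser.**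
For `η⁺(y) = max(y,0)` and every `ε ∈ [0,1]`,
`sup_{ν ∈ F_{1,ε,+}} E (X − η⁺(X+Z))² = (1+ε)/2`, with `X ∼ ν` and
`Z ∼ N(0,1)` independent. -/
theorem pos_part_minimax (ε : ℝ) (hε0 : 0 ≤ ε) (hε1 : ε ≤ 1) :
    (⨆ ν ∈ posSparse ε,
      ∫⁻ p : ℝ × ℝ, ENNReal.ofReal ((p.1 - max (p.1 + p.2) 0) ^ 2)
        ∂(ν.prod (gaussianReal 0 1)))
      = ENNReal.ofReal ((1 + ε) / 2) := by
  have hhalf : (2⁻¹ : ℝ≥0∞) = ENNReal.ofReal 2⁻¹ := by simp [ENNReal.ofReal_inv_of_pos]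
  apply le_antisymm
  · refine iSup₂_le fun ν hν => ?_
    have : IsProbabilityMeasure ν := hν.1
    calc _ = ∫⁻ x, posPartRisk x ∂ν := lintegral_prod_gaussianReal_eq_lintegral_posPartRisk ν
      _ ≤ 2⁻¹ + 2⁻¹ * ENNReal.ofReal ε := lintegral_posPartRisk_le hν
      _ = ENNReal.ofReal ((1 + ε) / 2) := by
        rw [hhalf, ← ENNReal.ofReal_mul (by norm_num), ← ENNReal.ofReal_add (by norm_num)
          (by positivity)]
        ring_nf
  · calc ENNReal.ofReal ((1 + ε) / 2)
        = ENNReal.ofReal (1 - ε) * 2⁻¹ + ENNReal.ofReal ε * ⨆ n : ℕ, posPartRisk n := by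
          rw [iSup_posPartRisk_natCast, mul_one, hhalf, ← ENNReal.ofReal_mul (by linarith),
            ← ENNReal.ofReal_add (by nlinarith) hε0]
          ring_nf
      _ = ⨆ n : ℕ, ∫⁻ x, posPartRisk x ∂sparseTwoPoint ε n := by
          simp only [lintegral_posPartRisk_sparseTwoPoint, ENNReal.mul_iSup, ENNReal.add_iSup]
      _ ≤ _ := iSup_le fun n => by
          have hmem := sparseTwoPoint_mem_posSparse hε0 hε1 n.cast_nonneg
          have : IsProbabilityMeasure (sparseTwoPoint ε n) := hmem.1
          exact le_iSup₂_of_le _ hmem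
            (lintegral_prod_gaussianReal_eq_lintegral_posPartRisk _).ge
end
end

section
/- Let η(·;τ): ℝ → ℝ be a scalar denoiser with parameter τ, extended to noise level σ > 0 by η(y;τ,σ) = σ·η(y/σ;τ). For ε ∈ (0,1] and μ ≥ 0 let ν_{ε,μ} = (1−ε)δ₀ + ε δ_μ and define the risk R(m;τ) = E_{ν_{ε,m}}[(η(X+Z;τ) − X)²] with X ∼ ν_{ε,m}, Z ∼ N(0,1) independent, and for δ > 0 the state evolution map Ψ(m) = (m/δ)·R(μ/√m; τ) for m > 0. Suppose there exists μ* > 0 such that: (i) R is superquadratic on [0,μ*), i.e. R(m;τ) ≥ (m/μ*)²·R(μ*;τ) for all m ∈ [0,μ*); (ii) R(μ*;τ) ≥ δ; and (iii) δ ≥ ε. Then, setting m_fp = (μ/μ*)², for every m ≥ m_fp one has Ψ(m) ≥ m_fp. In particular, if m_fp < m₀ = ε μ², then the state evolution sequence m_{t+1} = Ψ(m_t) started at m₀ satisfies m_t ≥ m_fp > 0 for all t ≥ 0. -/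
open MeasureTheory ProbabilityTheory ENNReal

/-!
Write `s = μ / √m`. When `m ≥ (μ/μ*)²` we have `s ≤ μ*`, and superquadraticity together with
`R(μ*) ≥ δ` gives `R(s) ≥ (s/μ*)² δ`; hence `Ψ(m) = (m/δ) R(s) ≥ m s² / μ*² = (μ/μ*)²`.
So `[m_fp, ∞)` is invariant under `Ψ`, and it contains `m₀` as soon as `m_fp < m₀`.
-/

theorem sq_div_mul_le_of_superquadratic {R : ℝ → ℝ} {δ μstar s : ℝ} (hμstar : 0 < μstar)
    (hsq : ∀ x : ℝ, 0 ≤ x → x < μstar → (x / μstar) ^ 2 * R μstar ≤ R x)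
    (hRδ : δ ≤ R μstar) (hs0 : 0 ≤ s) (hs : s ≤ μstar) :
    (s / μstar) ^ 2 * δ ≤ R s := by
  rcases hs.lt_or_eq with hlt | rfl
  · calc (s / μstar) ^ 2 * δ ≤ (s / μstar) ^ 2 * R μstar := by gcongr
      _ ≤ R s := hsq s hs0 hlt
  · simpa [hμstar.ne'] using hRδ

theorem sq_div_le_stateEvolution {R : ℝ → ℝ} {δ μ μstar m : ℝ} (hδ : 0 < δ) (hμ : 0 ≤ μ)
    (hμstar : 0 < μstar)
    (hsq : ∀ x : ℝ, 0 ≤ x → x < μstar → (x / μstar) ^ 2 * R μstar ≤ R x)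
    (hRδ : δ ≤ R μstar) (hm : (μ / μstar) ^ 2 ≤ m) :
    (μ / μstar) ^ 2 ≤ m / δ * R (μ / √m) := by
  rcases ((sq_nonneg _).trans hm).eq_or_lt' with rfl | hm0
  · simpa using hm
  have hsqrt : μ / μstar ≤ √m := Real.le_sqrt_of_sq_le hm
  have hsqrt0 : 0 < √m := Real.sqrt_pos.mpr hm0
  have hs : μ / √m ≤ μstar := by
    rw [div_le_iff₀ hsqrt0]
    calc μ = μstar * (μ / μstar) := by field_simp
      _ ≤ μstar * √m := by gcongr
  calc (μ / μstar) ^ 2 = m / δ * ((μ / √m / μstar) ^ 2 * δ) := by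
        field_simp
        rw [Real.sq_sqrt hm0.le]
    _ ≤ m / δ * R (μ / √m) := by
        gcongr
        exact sq_div_mul_le_of_superquadratic hμstar hsq hRδ (by positivity) hs

theorem le_of_le_recurrence {α : Type*} [LE α] {f : α → α} {a : α} (hf : ∀ m, a ≤ m → a ≤ f m)
    {ms : ℕ → α}
    (h0 : a ≤ ms 0) (hrec : ∀ t, ms (t + 1) = f (ms t)) (t : ℕ) : a ≤ ms t := by
  induction t with
  | zero => exact h0
  | succ t ih => exact hrec t ▸ hf _ ih

theorem superquadratic_nonconvergence_general
    (ε δ μ : ℝ) (hδ : 0 < δ) (hμ : 0 ≤ μ)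
    (R : ℝ → ℝ)
    (Ψ : ℝ → ℝ) (hΨ : ∀ m : ℝ, Ψ m = (m / δ) * R (μ / Real.sqrt m))
    (μstar : ℝ) (hμstar : 0 < μstar)
    (hsq : ∀ m : ℝ, 0 ≤ m → m < μstar → ((m / μstar) ^ 2) * R μstar ≤ R m)
    (hRδ : δ ≤ R μstar) :
    (∀ m : ℝ, (μ / μstar) ^ 2 ≤ m → (μ / μstar) ^ 2 ≤ Ψ m) ∧
    ((μ / μstar) ^ 2 < ε * μ ^ 2 →
      ∀ ms : ℕ → ℝ, ms 0 = ε * μ ^ 2 → (∀ t : ℕ, ms (t + 1) = Ψ (ms t)) →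
        0 < (μ / μstar) ^ 2 ∧ ∀ t : ℕ, (μ / μstar) ^ 2 ≤ ms t) := by
  have hinv : ∀ m : ℝ, (μ / μstar) ^ 2 ≤ m → (μ / μstar) ^ 2 ≤ Ψ m := fun m hm =>
    hΨ m ▸ sq_div_le_stateEvolution hδ hμ hμstar hsq hRδ hm
  refine ⟨hinv, fun hlt ms h0 hrec => ⟨?_, le_of_le_recurrence hinv (h0 ▸ hlt.le) hrec⟩⟩
  have hμ0 : μ ≠ 0 := by
    rintro rfl
    simp at hlt
  positivity

/-- **Superquadratic risk implies non-convergence of state evolution.**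
Let `η` be a scalar denoiser (at a fixed tuning `τ`, extended to noise level
`σ` by `η(y;τ,σ) = σ η(y/σ;τ)`), let `ν_{ε,m} = (1−ε)δ₀ + εδ_m`, and let
`R(m) = E_{ν_{ε,m}}[(η(X+Z) − X)²]` be the risk function and
`Ψ(m) = (m/δ)·R(μ/√m)` the state evolution map at undersampling ratio `δ`.
Suppose there is `μ* > 0` such that (i) `R` is superquadratic on `[0,μ*)`,
(ii) `R(μ*) ≥ δ`, and (iii) `δ ≥ ε`.  Then, with `m_fp = (μ/μ*)²`, for every
`m ≥ m_fp` one has `Ψ(m) ≥ m_fp`; in particular, if `m_fp < m₀ = εμ²`, the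
state evolution sequence started at `m₀` satisfies `m_t ≥ m_fp > 0` for all
`t`. -/
theorem superquadratic_nonconvergence
    (η : ℝ → ℝ) (hη : Measurable η)
    (ε δ μ : ℝ) (hε0 : 0 < ε) (hε1 : ε ≤ 1) (hδ : 0 < δ) (hμ : 0 ≤ μ)
    (R : ℝ → ℝ)
    (hR : ∀ m : ℝ, R m =
      ∫ p : ℝ × ℝ, (η (p.1 + p.2) - p.1) ^ 2
        ∂(((ENNReal.ofReal (1 - ε) • Measure.dirac (0 : ℝ) +
            ENNReal.ofReal ε • Measure.dirac m)).prod (gaussianReal 0 1)))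
    (Ψ : ℝ → ℝ) (hΨ : ∀ m : ℝ, Ψ m = (m / δ) * R (μ / Real.sqrt m))
    (μstar : ℝ) (hμstar : 0 < μstar)
    (hsq : ∀ m : ℝ, 0 ≤ m → m < μstar → ((m / μstar) ^ 2) * R μstar ≤ R m)
    (hRδ : δ ≤ R μstar) (hδε : ε ≤ δ) :
    (∀ m : ℝ, (μ / μstar) ^ 2 ≤ m → (μ / μstar) ^ 2 ≤ Ψ m) ∧
    ((μ / μstar) ^ 2 < ε * μ ^ 2 →
      ∀ ms : ℕ → ℝ, ms 0 = ε * μ ^ 2 → (∀ t : ℕ, ms (t + 1) = Ψ (ms t)) →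
        0 < (μ / μstar) ^ 2 ∧ ∀ t : ℕ, (μ / μstar) ^ 2 ≤ ms t) :=
  superquadratic_nonconvergence_general ε δ μ hδ hμ R Ψ hΨ μstar hμstar hsq hRδ
end
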